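/- Let Γ₁ be a group, Γ₂ ⊴ Γ₁ normal of finite index, Δ = Γ₁/Γ₂, M an abelian group with Δ-action, and 𝓔 the ℤ[Δ]-module built from Γ₂^{ab}, I_Δ and the 2-cocycle κ. Then for every abelian group V there is an isomorphism of abelian groups Hom((𝓔 ⊗ M)_Δ, V) ≅ Z¹(Γ₁, Hom(M, V)), functorial in V, where Δ acts diagonally on 𝓔 ⊗ M and Γ₁ acts on Hom(M, V) by (γ·f)(m) = f(π(γ)^{-1}·m). -/

import Mathlib

/-!
STATEMENT 5.  For every abelian group V there is an isomorphism
Hom((𝓔 ⊗ M)_Δ, V) ≅ Z¹(Γ₁, Hom(M, V)), functorial in V, where Δ acts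
diagonally on 𝓔 ⊗ M and Γ₁ acts on Hom(M,V) by (γ·f)(m) = f(π(γ)⁻¹·m).
-/

open scoped TensorProduct

section EModule

variable {Γ₁ Δ : Type} [Group Γ₁] [Group Δ]

/-- The augmentation map `ℤ[Δ] → ℤ` (sum of coefficients), with `ℤ[Δ]`
realized as `Δ →₀ ℤ`. -/
noncomputable def augmentation (Δ : Type) : (Δ →₀ ℤ) →+ ℤ :=
  Finsupp.liftAddHom fun _ => AddMonoidHom.id ℤ

/-- The augmentation ideal `I_Δ ⊆ ℤ[Δ]`, as an additive subgroup. -/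
noncomputable def augIdeal (Δ : Type) : AddSubgroup (Δ →₀ ℤ) := (augmentation Δ).ker

/-- The element `c − 1` of `I_Δ`. -/
noncomputable def aidElt [Group Δ] (c : Δ) : ↥(augIdeal Δ) :=
  ⟨Finsupp.single c 1 - Finsupp.single 1 1, by
    simp [augIdeal, AddMonoidHom.mem_ker, map_sub, augmentation,
      Finsupp.liftAddHom_apply_single]⟩

/-- The element `a − b` of `I_Δ`. -/
noncomputable def aidElt2 [Group Δ] (a b : Δ) : ↥(augIdeal Δ) :=
  ⟨Finsupp.single a 1 - Finsupp.single b 1, by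
    simp [augIdeal, AddMonoidHom.mem_ker, map_sub, augmentation,
      Finsupp.liftAddHom_apply_single]⟩

/-- The underlying abelian group `Γ₂^{ab} ⊕ I_Δ` of the ℤ[Δ]-module 𝓔
(with `Γ₂ = ker π` and `Γ₂^{ab}` its abelianization, written additively). -/
abbrev EMod (π : Γ₁ →* Δ) : Type :=
  Additive (Abelianization ↥π.ker) × ↥(augIdeal Δ)

/-- The Δ-action `d·[k] = [σ(d) k σ(d)⁻¹]` on `Γ₂^{ab}` (conjugation uses
normality of `Γ₂ = ker π`). -/
noncomputable def conjAb (π : Γ₁ →* Δ) (σ : Δ → Γ₁) (d : Δ) :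
    Abelianization ↥π.ker →* Abelianization ↥π.ker :=
  Abelianization.map (MulAut.conjNormal (σ d)).toMonoidHom

/-- The 2-cocycle `κ(d,c) = [σ(d)σ(c)σ(dc)⁻¹] ∈ Γ₂^{ab}`. -/
noncomputable def kappaE (π : Γ₁ →* Δ) (σ : Δ → Γ₁) (hσ : ∀ c, π (σ c) = c)
    (d c : Δ) : Abelianization ↥π.ker :=
  Abelianization.of ⟨σ d * σ c * (σ (d * c))⁻¹, by
    have : π (σ d * σ c * (σ (d * c))⁻¹) = 1 := by
      rw [map_mul, map_mul, map_inv, hσ, hσ, hσ, mul_inv_cancel]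
    simpa [MonoidHom.mem_ker] using this⟩

/-- The defining formula of the Δ-action on `𝓔 = Γ₂^{ab} ⊕ I_Δ`:
`d ∗ (g, c−1) = (d·g + κ(d,c), dc − d)`, extended ℤ-linearly.  (The elements
`(g, c−1)` generate `𝓔`, so this determines the action.) -/
def EActionFormula (π : Γ₁ →* Δ) (σ : Δ → Γ₁) (hσ : ∀ c, π (σ c) = c)
    [DistribMulAction Δ (EMod π)] : Prop :=
  ∀ (d : Δ) (g : Abelianization ↥π.ker) (c : Δ),
    d • ((Additive.ofMul g, aidElt c) : EMod π) =
      (Additive.ofMul (conjAb π σ d g * kappaE π σ hσ d c), aidElt2 (d * c) d)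

variable (M : Type) [AddCommGroup M] [DistribMulAction Δ M]

/-- `T = 𝓔 ⊗ M`. -/
abbrev TMod (π : Γ₁ →* Δ) : Type := (EMod π) ⊗[ℤ] M

/-- The diagonal action of `d ∈ Δ` on `𝓔 ⊗ M`. -/
noncomputable def diagT (π : Γ₁ →* Δ) [DistribMulAction Δ (EMod π)] (d : Δ) :
    TMod M π →ₗ[ℤ] TMod M π :=
  TensorProduct.map ((DistribMulAction.toAddMonoidHom (EMod π) d).toIntLinearMap)
    ((DistribMulAction.toAddMonoidHom M d).toIntLinearMap)

/-- The subgroup of `𝓔 ⊗ M` generated by the elements `d•t − t`. -/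
noncomputable def coinvKerT (π : Γ₁ →* Δ) [DistribMulAction Δ (EMod π)] :
    AddSubgroup (TMod M π) :=
  AddSubgroup.closure {x | ∃ (d : Δ) (t : TMod M π), x = diagT M π d t - t}

/-- The Δ-coinvariants `(𝓔 ⊗ M)_Δ`. -/
abbrev CoinvT (π : Γ₁ →* Δ) [DistribMulAction Δ (EMod π)] : Type :=
  TMod M π ⧸ coinvKerT M π

/-- 1-cocycles `Z¹(Γ₁, Hom(M,V))`, where `Γ₁` acts on `Hom(M,V)` by
`(γ·f)(m) = f(π(γ)⁻¹·m)`. -/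
noncomputable def ZOneM (π : Γ₁ →* Δ) (V : Type) [AddCommGroup V] :
    AddSubgroup (Γ₁ → (M →+ V)) where
  carrier := {Φ | ∀ (g h : Γ₁) (m : M), Φ (g * h) m = Φ g m + Φ h ((π g)⁻¹ • m)}
  zero_mem' := by intro g h m; simp
  add_mem' := by
    intro Φ Ψ hΦ hΨ g h m
    simp only [Pi.add_apply, AddMonoidHom.add_apply, hΦ g h m, hΨ g h m]
    abel
  neg_mem' := by
    intro Φ hΦ g h m
    simp only [Pi.neg_apply, AddMonoidHom.neg_apply, hΦ g h m]
    abel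

/-- The subgroup `I_Δ·M ⊆ M` generated by the elements `c•m − m`. -/
noncomputable def idealSMulM : AddSubgroup M :=
  AddSubgroup.closure {x : M | ∃ (c : Δ) (m : M), x = c • m - m}

/-- First differential `(Γ₁ →₀ M) → M`, `[g]⊗m ↦ π(g)•m − m`, of the complex
computing `H_1(Γ₁, M)` (with `Γ₁` acting on `M` through `π`). -/
noncomputable def dOne (π : Γ₁ →* Δ) : (Γ₁ →₀ M) →+ M :=
  Finsupp.liftAddHom fun g =>
    DistribMulAction.toAddMonoidHom M (π g) - AddMonoidHom.id M

/-- Second differential `(Γ₁×Γ₁ →₀ M) → (Γ₁ →₀ M)`,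
`[g|h]⊗m ↦ [h]⊗m − [gh]⊗m + [g]⊗(π(h)•m)`. -/
noncomputable def dTwo (π : Γ₁ →* Δ) : ((Γ₁ × Γ₁) →₀ M) →+ (Γ₁ →₀ M) :=
  Finsupp.liftAddHom fun p =>
    (Finsupp.singleAddHom p.2 - Finsupp.singleAddHom (p.1 * p.2)
      + (Finsupp.singleAddHom p.1).comp (DistribMulAction.toAddMonoidHom M (π p.2)) :
        M →+ (Γ₁ →₀ M))

/-- The group homology `H_1(Γ₁, M)` (action of `Γ₁` on `M` through `π`). -/
abbrev HOne (π : Γ₁ →* Δ) : Type :=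
  ↥(dOne M π).ker ⧸ ((dTwo M π).range.addSubgroupOf (dOne M π).ker)

end EModule

/-!
The map `E : g ↦ ([g σ(π g)⁻¹], π g - 1)` from `Γ₁` to `𝓔` is a crossed homomorphism,
`E(gh) = E(g) + π(g) ∗ E(h)`: this is exactly what the twisted action on `𝓔` encodes. Hence a
homomorphism `ψ` out of `(𝓔 ⊗ M)_Δ` gives the cocycle `g ↦ (m ↦ ψ[E(g) ⊗ m])`. Conversely, a
cocycle `Φ` is additive on `Γ₂`, so it factors through `Γ₂^{ab}`, and
`(k, c - 1) ⊗ m ↦ Φ(k)(m) + Φ(σ c)(m) - Φ(σ 1)(m)` is `Δ`-invariant by the cocycle identities for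
conjugation by `σ d` and for `κ`. The two constructions are mutually inverse because `𝓔` is
generated by `Γ₂^{ab}` and the elements `c - 1`, on which `E` restricts to `k ↦ ([k], 0)` and
`σ c ↦ (0, c - 1)`.
-/

@[simp] lemma augmentation_single {Δ : Type} (c : Δ) (n : ℤ) :
    augmentation Δ (Finsupp.single c n) = n := by
  simp [augmentation]

section AugIdeal

variable {Δ : Type} [Group Δ]

@[simp] lemma coe_aidElt (c : Δ) :
    (aidElt c : Δ →₀ ℤ) = Finsupp.single c 1 - Finsupp.single 1 1 := rfl

@[simp] lemma coe_aidElt2 (a b : Δ) :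
    (aidElt2 a b : Δ →₀ ℤ) = Finsupp.single a 1 - Finsupp.single b 1 := rfl

@[simp] lemma aidElt_one : aidElt (1 : Δ) = 0 :=
  Subtype.ext (by simp)

@[simp] lemma aidElt2_self (d : Δ) : aidElt2 d d = 0 :=
  Subtype.ext (by simp)

lemma aidElt_add_aidElt2 (c e : Δ) : aidElt c + aidElt2 (c * e) c = aidElt (c * e) :=
  Subtype.ext (by push_cast [coe_aidElt, coe_aidElt2]; abel)

lemma augIdeal.addMonoidHom_ext {X : Type} [AddCommGroup X] {f₁ f₂ : augIdeal Δ →+ X}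
    (h : ∀ c, f₁ (aidElt c) = f₂ (aidElt c)) : f₁ = f₂ := by
  -- `r y = ∑ y(c) • (c - 1) = y - ε(y) • 1`, which is `y` itself on `I_Δ`.
  let r : (Δ →₀ ℤ) →+ augIdeal Δ := Finsupp.liftAddHom fun c => zmultiplesHom _ (aidElt c)
  have hr : (augIdeal Δ).subtype.comp r =
      AddMonoidHom.id _ - (Finsupp.singleAddHom 1).comp (augmentation Δ) :=
    Finsupp.addHom_ext fun c n => by simp [r, smul_sub, Finsupp.smul_single]
  have hr_id (y : augIdeal Δ) : r y = y := Subtype.ext <| by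
    simpa [show augmentation Δ y = 0 from y.2] using DFunLike.congr_fun hr (y : Δ →₀ ℤ)
  have hcomp : f₁.comp r = f₂.comp r := Finsupp.addHom_ext fun c n => by simp [r, h]
  ext y
  simpa [hr_id] using DFunLike.congr_fun hcomp (y : Δ →₀ ℤ)

noncomputable def augIdeal.lift {A : Type} [AddCommGroup A] (f : Δ → A) : augIdeal Δ →+ A :=
  (Finsupp.liftAddHom fun c => zmultiplesHom A (f c)).comp (augIdeal Δ).subtype

@[simp] lemma augIdeal.lift_aidElt {A : Type} [AddCommGroup A] (f : Δ → A) (c : Δ) :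
    augIdeal.lift f (aidElt c) = f c - f 1 := by
  simp only [augIdeal.lift, AddMonoidHom.comp_apply, AddSubgroup.coe_subtype, coe_aidElt,
    map_sub, Finsupp.liftAddHom_apply_single, zmultiplesHom_apply, one_zsmul]

@[simp] lemma augIdeal.lift_aidElt2 {A : Type} [AddCommGroup A] (f : Δ → A) (a b : Δ) :
    augIdeal.lift f (aidElt2 a b) = f a - f b := by
  simp only [augIdeal.lift, AddMonoidHom.comp_apply, AddSubgroup.coe_subtype, coe_aidElt2,
    map_sub, Finsupp.liftAddHom_apply_single, zmultiplesHom_apply, one_zsmul]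

end AugIdeal

section EMod

variable {Γ₁ Δ : Type} [Group Γ₁] [Group Δ] {π : Γ₁ →* Δ}

lemma EMod.addMonoidHom_ext {X : Type} [AddCommGroup X] {f₁ f₂ : EMod π →+ X}
    (hker : ∀ k : π.ker, f₁ (Additive.ofMul (Abelianization.of k), 0) =
      f₂ (Additive.ofMul (Abelianization.of k), 0))
    (haug : ∀ c : Δ, f₁ (0, aidElt c) = f₂ (0, aidElt c)) : f₁ = f₂ := by
  have hr : f₁.comp (AddMonoidHom.inr _ _) = f₂.comp (AddMonoidHom.inr _ _) :=
    augIdeal.addMonoidHom_ext haug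
  ext ⟨a, y⟩
  obtain ⟨k, rfl⟩ : ∃ k : π.ker, Additive.ofMul (Abelianization.of k) = a :=
    QuotientGroup.mk_surjective (Additive.toMul a)
  have hsplit : ((Additive.ofMul (Abelianization.of k), y) : EMod π) =
      (Additive.ofMul (Abelianization.of k), 0) + (0, y) := by simp
  rw [hsplit, map_add, map_add, hker]
  exact congrArg _ (DFunLike.congr_fun hr y)

end EMod

section Coinvariants

variable {Γ₁ Δ : Type} [Group Γ₁] [Group Δ] {π : Γ₁ →* Δ}
  {M : Type} [AddCommGroup M] [DistribMulAction Δ M] [DistribMulAction Δ (EMod π)]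

lemma diagT_tmul (d : Δ) (e : EMod π) (m : M) :
    diagT M π d (e ⊗ₜ[ℤ] m) = (d • e) ⊗ₜ[ℤ] (d • m) := rfl

lemma CoinvT.mk_diagT (d : Δ) (t : TMod M π) :
    ((diagT M π d t : TMod M π) : CoinvT M π) = t :=
  QuotientAddGroup.eq_iff_sub_mem.2 (AddSubgroup.subset_closure ⟨d, t, rfl⟩)

lemma CoinvT.addMonoidHom_ext {X : Type} [AddCommGroup X] {f₁ f₂ : CoinvT M π →+ X}
    (hker : ∀ (k : π.ker) (m : M),
      f₁ ↑((Additive.ofMul (Abelianization.of k), 0) ⊗ₜ[ℤ] m : TMod M π) =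
        f₂ ↑((Additive.ofMul (Abelianization.of k), 0) ⊗ₜ[ℤ] m : TMod M π))
    (haug : ∀ (c : Δ) (m : M),
      f₁ ↑(((0, aidElt c) : EMod π) ⊗ₜ[ℤ] m : TMod M π) =
        f₂ ↑(((0, aidElt c) : EMod π) ⊗ₜ[ℤ] m : TMod M π)) :
    f₁ = f₂ := by
  refine QuotientAddGroup.addMonoidHom_ext _
    (AddMonoidHom.toIntLinearMap_injective (TensorProduct.ext' fun e m => ?_))
  let tmulRight : EMod π →+ TMod M π := ((TensorProduct.mk ℤ (EMod π) M).flip m).toAddMonoidHom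
  exact DFunLike.congr_fun (EMod.addMonoidHom_ext
    (f₁ := (f₁.comp (QuotientAddGroup.mk' _)).comp tmulRight)
    (f₂ := (f₂.comp (QuotientAddGroup.mk' _)).comp tmulRight) (hker · m) (haug · m)) e

end Coinvariants

section Cocycle

variable {Γ₁ Δ : Type} [Group Γ₁] [Group Δ] {π : Γ₁ →* Δ}
  {M : Type} [AddCommGroup M] [DistribMulAction Δ M] {V : Type} [AddCommGroup V]
  {Φ : Γ₁ → (M →+ V)}

namespace ZOneM

lemma apply_mul (hΦ : Φ ∈ ZOneM M π V) (g h : Γ₁) (m : M) :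
    Φ (g * h) m = Φ g m + Φ h ((π g)⁻¹ • m) :=
  hΦ g h m

lemma apply_one (hΦ : Φ ∈ ZOneM M π V) : Φ 1 = 0 := by
  ext m
  simpa using hΦ 1 1 m

lemma apply_ker_mul (hΦ : Φ ∈ ZOneM M π V) {k : Γ₁} (hk : k ∈ π.ker) (g : Γ₁) (m : M) :
    Φ (k * g) m = Φ k m + Φ g m := by
  rw [apply_mul hΦ, MonoidHom.mem_ker.1 hk, inv_one, one_smul]

lemma apply_conj (hΦ : Φ ∈ ZOneM M π V) (x : Γ₁) {k : Γ₁} (hk : k ∈ π.ker) (m : M) :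
    Φ (x * k * x⁻¹) (π x • m) = Φ k m := by
  have hinv := apply_mul hΦ x x⁻¹ (π x • m)
  simp only [mul_inv_cancel, apply_one hΦ, AddMonoidHom.zero_apply, inv_smul_smul] at hinv
  simp only [apply_mul hΦ, map_mul, MonoidHom.mem_ker.1 hk, mul_one, smul_smul, inv_mul_cancel,
    one_smul]
  rw [add_right_comm, ← hinv, zero_add]

noncomputable def kerHom (hΦ : Φ ∈ ZOneM M π V) : Additive (Abelianization π.ker) →+ (M →+ V) :=
  MonoidHom.toAdditiveLeft <| Abelianization.lift
    { toFun := fun k => Multiplicative.ofAdd (Φ k)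
      map_one' := by simp [apply_one hΦ]
      map_mul' := fun k k' => by
        ext m
        exact apply_ker_mul hΦ k.2 k' m }

@[simp] lemma kerHom_ofMul_of (hΦ : Φ ∈ ZOneM M π V) (k : π.ker) :
    kerHom hΦ (Additive.ofMul (Abelianization.of k)) = Φ k := rfl

end ZOneM

end Cocycle

section Kappa

variable {Γ₁ Δ : Type} [Group Γ₁] [Group Δ] {π : Γ₁ →* Δ} (σ : Δ → Γ₁)

lemma conjAb_of (d : Δ) (k : π.ker) :
    conjAb π σ d (Abelianization.of k) = Abelianization.of (MulAut.conjNormal (σ d) k) :=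
  Abelianization.map_of _ _

lemma kappaE_eq_one (hσ : ∀ c, π (σ c) = c) (hσ1 : σ 1 = 1) (d : Δ) :
    kappaE π σ hσ d 1 = 1 :=
  (congrArg Abelianization.of (Subtype.ext (by simp [hσ1]))).trans (map_one _)

end Kappa

section Lift

variable {Γ₁ Δ : Type} [Group Γ₁] [Group Δ] {π : Γ₁ →* Δ}
  {M : Type} [AddCommGroup M] [DistribMulAction Δ M] {V : Type} [AddCommGroup V]
  (σ : Δ → Γ₁) {Φ : Γ₁ → (M →+ V)}

namespace ZOneM

noncomputable def liftE (hΦ : Φ ∈ ZOneM M π V) : EMod π →+ (M →+ V) :=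
  (kerHom hΦ).coprod (augIdeal.lift fun c => Φ (σ c))

@[simp] lemma liftE_apply (hΦ : Φ ∈ ZOneM M π V) (a : Additive (Abelianization π.ker))
    (y : augIdeal Δ) :
    liftE σ hΦ (a, y) = kerHom hΦ a + augIdeal.lift (fun c => Φ (σ c)) y := rfl

noncomputable def liftT (hΦ : Φ ∈ ZOneM M π V) : TMod M π →+ V :=
  TensorProduct.liftAddHom (liftE σ hΦ) fun n e m => by simp

@[simp] lemma liftT_tmul (hΦ : Φ ∈ ZOneM M π V) (e : EMod π) (m : M) :
    liftT σ hΦ (e ⊗ₜ[ℤ] m) = liftE σ hΦ e m :=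
  TensorProduct.liftAddHom_tmul _ _ _ _

lemma liftT_diagT [DistribMulAction Δ (EMod π)] (hσ : ∀ c, π (σ c) = c) (hσ1 : σ 1 = 1)
    (hE : EActionFormula π σ hσ) (hΦ : Φ ∈ ZOneM M π V) (d : Δ) (t : TMod M π) :
    liftT σ hΦ (diagT M π d t) = liftT σ hΦ t := by
  induction t using TensorProduct.induction_on with
  | zero => simp
  | add x y hx hy => simp only [map_add, hx, hy]
  | tmul e m =>
    rw [diagT_tmul, liftT_tmul, liftT_tmul]
    suffices ((liftE σ hΦ).flip (d • m)).comp (DistribSMul.toAddMonoidHom _ d) =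
        (liftE σ hΦ).flip m from DFunLike.congr_fun this e
    refine EMod.addMonoidHom_ext (fun k => ?_) (fun c => ?_)
    · have h := hE d (Abelianization.of k) 1
      rw [aidElt_one] at h
      simp only [AddMonoidHom.coe_comp, Function.comp_apply, DistribSMul.toAddMonoidHom_apply, h,
        conjAb_of, kappaE_eq_one σ hσ hσ1, mul_one, aidElt2_self, AddMonoidHom.flip_apply,
        liftE_apply, kerHom_ofMul_of, MulAut.conjNormal_apply, map_zero, add_zero]
      simpa [hσ] using apply_conj hΦ (σ d) k.2 m
    · have h : d • ((0, aidElt c) : EMod π) = _ := hE d 1 c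
      simp only [h, map_one, one_mul, kappaE, liftE_apply, kerHom_ofMul_of, augIdeal.lift_aidElt,
        augIdeal.lift_aidElt2, map_zero, zero_add, AddMonoidHom.add_apply, AddMonoidHom.sub_apply,
        hσ1, apply_one hΦ, sub_zero, AddMonoidHom.flip_apply, AddMonoidHom.comp_apply,
        DistribSMul.toAddMonoidHom_apply]
      -- `σ d * σ c = κ(d, c) * σ (d * c)` with `κ(d, c) ∈ Γ₂`
      have hk : σ d * σ c * (σ (d * c))⁻¹ ∈ π.ker := by simp [hσ]
      have hκ := apply_ker_mul hΦ hk (σ (d * c)) (d • m)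
      rw [inv_mul_cancel_right, apply_mul hΦ, hσ, inv_smul_smul] at hκ
      rw [← add_sub_assoc, ← hκ, add_sub_cancel_left]

end ZOneM

end Lift

section CrossedHom

variable {Γ₁ Δ : Type} [Group Γ₁] [Group Δ] {π : Γ₁ →* Δ} {σ : Δ → Γ₁}

noncomputable def EMod.crossedHom (hσ : ∀ c, π (σ c) = c) (g : Γ₁) : EMod π :=
  (Additive.ofMul (Abelianization.of ⟨g * (σ (π g))⁻¹, by simp [hσ]⟩), aidElt (π g))

lemma EMod.crossedHom_section (hσ : ∀ c, π (σ c) = c) (c : Δ) :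
    EMod.crossedHom hσ (σ c) = (0, aidElt c) := by
  refine Prod.ext ?_ (congrArg aidElt (hσ c))
  rw [show (0 : Additive (Abelianization π.ker)) = Additive.ofMul (Abelianization.of 1) by simp]
  exact congrArg (Additive.ofMul ∘ Abelianization.of) (Subtype.ext (by simp [hσ]))

lemma EMod.crossedHom_ker (hσ : ∀ c, π (σ c) = c) (hσ1 : σ 1 = 1) (k : π.ker) :
    EMod.crossedHom hσ k = (Additive.ofMul (Abelianization.of k), 0) := by
  have hk : π k = 1 := k.2
  exact Prod.ext
    (congrArg (Additive.ofMul ∘ Abelianization.of) (Subtype.ext (by simp [hk, hσ1])))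
    ((congrArg aidElt hk).trans aidElt_one)

lemma EMod.crossedHom_mul [DistribMulAction Δ (EMod π)] (hσ : ∀ c, π (σ c) = c)
    (hE : EActionFormula π σ hσ) (g h : Γ₁) :
    EMod.crossedHom hσ (g * h) = EMod.crossedHom hσ g + π g • EMod.crossedHom hσ h := by
  rw [show π g • EMod.crossedHom hσ h = _ from hE (π g) _ (π h)]
  refine Prod.ext ?_ ?_
  · show Additive.ofMul (Abelianization.of _) = Additive.ofMul (Abelianization.of _) +
      Additive.ofMul (conjAb π σ (π g) (Abelianization.of _) * kappaE π σ hσ (π g) (π h))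
    rw [conjAb_of, kappaE, ← ofMul_mul, ← map_mul, ← map_mul]
    refine congrArg (Additive.ofMul ∘ Abelianization.of) (Subtype.ext ?_)
    simp only [Subgroup.coe_mul, MulAut.conjNormal_apply, map_mul]
    group
  · show aidElt (π (g * h)) = aidElt (π g) + aidElt2 (π g * π h) (π g)
    rw [aidElt_add_aidElt2, map_mul]

end CrossedHom

section Equiv

variable {Γ₁ Δ : Type} [Group Γ₁] [Group Δ] {π : Γ₁ →* Δ} {σ : Δ → Γ₁}
  {M : Type} [AddCommGroup M] [DistribMulAction Δ M] [DistribMulAction Δ (EMod π)]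
  (V : Type) [AddCommGroup V]

noncomputable def cocycleOfHom (hσ : ∀ c, π (σ c) = c) (hE : EActionFormula π σ hσ)
    (ψ : CoinvT M π →+ V) : ZOneM M π V :=
  ⟨fun g => (ψ.comp (QuotientAddGroup.mk' _)).comp
      (TensorProduct.mk ℤ (EMod π) M (EMod.crossedHom hσ g)).toAddMonoidHom,
    fun g h m => by
      show ψ ↑(EMod.crossedHom hσ (g * h) ⊗ₜ[ℤ] m) =
        ψ ↑(EMod.crossedHom hσ g ⊗ₜ[ℤ] m) + ψ ↑(EMod.crossedHom hσ h ⊗ₜ[ℤ] ((π g)⁻¹ • m))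
      rw [← CoinvT.mk_diagT (π g) (EMod.crossedHom hσ h ⊗ₜ[ℤ] _), diagT_tmul, smul_inv_smul,
        ← map_add, ← QuotientAddGroup.mk_add, ← TensorProduct.add_tmul,
        EMod.crossedHom_mul hσ hE]⟩

noncomputable def homOfCocycle (hσ : ∀ c, π (σ c) = c) (hσ1 : σ 1 = 1)
    (hE : EActionFormula π σ hσ) (Φ : ZOneM M π V) : CoinvT M π →+ V :=
  QuotientAddGroup.lift _ (ZOneM.liftT σ Φ.2) <| (AddSubgroup.closure_le _).2 <| by
    rintro _ ⟨d, t, rfl⟩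
    simp [ZOneM.liftT_diagT σ hσ hσ1 hE]

@[simp] lemma cocycleOfHom_apply (hσ : ∀ c, π (σ c) = c) (hE : EActionFormula π σ hσ)
    (ψ : CoinvT M π →+ V) (g : Γ₁) (m : M) :
    (cocycleOfHom V hσ hE ψ : Γ₁ → (M →+ V)) g m = ψ ↑(EMod.crossedHom hσ g ⊗ₜ[ℤ] m) := rfl

@[simp] lemma homOfCocycle_mk (hσ : ∀ c, π (σ c) = c) (hσ1 : σ 1 = 1)
    (hE : EActionFormula π σ hσ) (Φ : ZOneM M π V) (t : TMod M π) :
    homOfCocycle V hσ hσ1 hE Φ t = ZOneM.liftT σ Φ.2 t := rfl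

noncomputable def coinvHomEquivZOneM (hσ : ∀ c, π (σ c) = c) (hσ1 : σ 1 = 1)
    (hE : EActionFormula π σ hσ) : (CoinvT M π →+ V) ≃+ ZOneM M π V where
  toFun := cocycleOfHom V hσ hE
  invFun := homOfCocycle V hσ hσ1 hE
  left_inv ψ := by
    refine CoinvT.addMonoidHom_ext (fun k m => ?_) (fun c m => ?_)
    · simp [EMod.crossedHom_ker hσ hσ1]
    · simp [EMod.crossedHom_section hσ, Prod.mk_zero_zero]
  right_inv Φ := by
    refine Subtype.ext (funext fun g => AddMonoidHom.ext fun m => ?_)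
    simp only [cocycleOfHom_apply, EMod.crossedHom, homOfCocycle_mk, ZOneM.liftT_tmul,
      ZOneM.liftE_apply, ZOneM.kerHom_ofMul_of, augIdeal.lift_aidElt, AddMonoidHom.add_apply,
      hσ1, ZOneM.apply_one Φ.2, sub_zero]
    rw [← ZOneM.apply_ker_mul Φ.2 (by simp [hσ]), inv_mul_cancel_right]
  map_add' _ _ := rfl

end Equiv

section Statement5

variable {Γ₁ Δ : Type} [Group Γ₁] [Group Δ]

theorem statement5_general
    (π : Γ₁ →* Δ)
    (σ : Δ → Γ₁) (hσ : ∀ c, π (σ c) = c) (hσ1 : σ 1 = 1)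
    [DistribMulAction Δ (EMod π)] (hE : EActionFormula π σ hσ)
    (M : Type) [AddCommGroup M] [DistribMulAction Δ M] :
    ∃ Θ : ∀ (V : Type) [AddCommGroup V],
        (CoinvT M π →+ V) ≃+ ↥(ZOneM M π V),
      -- functoriality in V: for f : V →+ W, Θ(f ∘ ψ) = (postcompose f)(Θ ψ)
      ∀ (V W : Type) [AddCommGroup V] [AddCommGroup W] (f : V →+ W)
          (ψ : CoinvT M π →+ V) (g : Γ₁) (m : M),
        ((Θ W (f.comp ψ) : Γ₁ → (M →+ W)) g) m =
          f (((Θ V ψ : Γ₁ → (M →+ V)) g) m) :=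
  ⟨fun V _ => coinvHomEquivZOneM V hσ hσ1 hE, fun _ _ _ _ _ _ _ _ => rfl⟩

theorem statement5
    (π : Γ₁ →* Δ) (hπ : Function.Surjective π)
    (σ : Δ → Γ₁) (hσ : ∀ c, π (σ c) = c) (hσ1 : σ 1 = 1)
    [Fintype Δ]
    [DistribMulAction Δ (EMod π)] (hE : EActionFormula π σ hσ)
    (M : Type) [AddCommGroup M] [DistribMulAction Δ M] :
    ∃ Θ : ∀ (V : Type) [AddCommGroup V],
        (CoinvT M π →+ V) ≃+ ↥(ZOneM M π V),
      -- functoriality in V: for f : V →+ W, Θ(f ∘ ψ) = (postcompose f)(Θ ψ)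
      ∀ (V W : Type) [AddCommGroup V] [AddCommGroup W] (f : V →+ W)
          (ψ : CoinvT M π →+ V) (g : Γ₁) (m : M),
        ((Θ W (f.comp ψ) : Γ₁ → (M →+ W)) g) m =
          f (((Θ V ψ : Γ₁ → (M →+ V)) g) m) :=
  statement5_general π σ hσ hσ1 hE M

end Statement5
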